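/- In the (k,k)-cylindrical grid C_k^k, for every partition of the outermost cycle's vertex set C^k into two nonempty arcs X₁ and X₂ (each consisting of cyclically consecutive vertices), the maximum number of pairwise vertex-disjoint paths between X₁ and X₂ equals min(|X₁|, |X₂|). -/

import Mathlib

/-- The `(k,m)`-cylindrical grid. -/
def cylGrid (k m : ℕ) : SimpleGraph (Fin k × Fin m) where
  Adj p q := p ≠ q ∧
    ((p.2 = q.2 ∧ (((p.1 : ℕ) + 1) % k = (q.1 : ℕ) ∨ ((q.1 : ℕ) + 1) % k = (p.1 : ℕ))) ∨
      (p.1 = q.1 ∧ ((p.2 : ℕ) + 1 = (q.2 : ℕ) ∨ (q.2 : ℕ) + 1 = (p.2 : ℕ))))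
  symm := by
    constructor
    rintro p q ⟨hne, h⟩
    refine ⟨hne.symm, ?_⟩
    rcases h with ⟨h1, h2⟩ | ⟨h1, h2⟩
    · exact Or.inl ⟨h1.symm, h2.symm⟩
    · exact Or.inr ⟨h1.symm, h2.symm⟩
  loopless := ⟨fun p h => h.1 rfl⟩

/-- There are `n` pairwise vertex-disjoint `(X,Y)`-paths in `G`. -/
def DisjointPathFamily {V : Type} (G : SimpleGraph V) (X Y : Set V) (n : ℕ) : Prop :=
  ∃ (s t : Fin n → V) (P : ∀ i, G.Walk (s i) (t i)),
    (∀ i, s i ∈ X) ∧ (∀ i, t i ∈ Y) ∧ (∀ i, (P i).IsPath) ∧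
      ∀ i j, i ≠ j → ∀ x, x ∈ (P i).support → x ∉ (P j).support

/-- `μ_G(X,Y)`: the maximum number of pairwise vertex-disjoint `(X,Y)`-paths. -/
noncomputable def mu {V : Type} (G : SimpleGraph V) (X Y : Set V) : ℕ :=
  sSup {n | DisjointPathFamily G X Y n}

/-- An arc of angular positions: a set of cyclically consecutive elements of `Fin k`. -/
def IsArc {k : ℕ} (X : Finset (Fin k)) : Prop :=
  ∃ (st : Fin k) (len : ℕ),
    X = (Finset.range len).image fun o => (⟨((st : ℕ) + o) % k, Nat.mod_lt _ st.pos⟩ : Fin k)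

/-!
Disjoint paths have distinct endpoints, so at most `min |X₁| |X₂|` of them exist. For the
converse write `X₁` as the `len` angles starting at `st` and cut the cylinder open into a grid
whose bottom row is the outer cycle. For `i < min len (k - len)` the `i`-th path descends `i`
rings at angle `st + len - 1 - i`, runs along that ring to angle `st + len + i` and climbs back
out; these nested U-shapes are pairwise disjoint and each joins `X₁` to `X₂`.
-/

open SimpleGraph Set

namespace DisjointPathFamily

variable {V W : Type} {G : SimpleGraph V} {X Y : Set V} {n : ℕ}

theorem of_walks {s t : Fin n → V} (P : ∀ i, G.Walk (s i) (t i)) (hs : ∀ i, s i ∈ X)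
    (ht : ∀ i, t i ∈ Y) (hP : ∀ i j, i ≠ j → ∀ x ∈ (P i).support, x ∉ (P j).support) :
    DisjointPathFamily G X Y n := by
  classical
  exact ⟨s, t, fun i => (P i).bypass, hs, ht, fun i => (P i).bypass_isPath,
    fun i j hij x hi hj => hP i j hij x ((P i).support_bypass_subset_support hi)
      ((P j).support_bypass_subset_support hj)⟩

theorem map {H : SimpleGraph W} {X' Y' : Set W} (f : G →g H) (hf : Function.Injective f)
    (hX : MapsTo f X X') (hY : MapsTo f Y Y') (h : DisjointPathFamily G X Y n) :
    DisjointPathFamily H X' Y' n := by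
  obtain ⟨s, t, P, hs, ht, hP, hdisj⟩ := h
  refine ⟨f ∘ s, f ∘ t, fun i => (P i).map f, fun i => hX (hs i), fun i => hY (ht i),
    fun i => (hP i).map hf, ?_⟩
  intro i j hij x hi hj
  simp only [Walk.support_map, List.mem_map] at hi hj
  obtain ⟨y, hy, rfl⟩ := hi
  obtain ⟨z, hz, hzy⟩ := hj
  exact hdisj i j hij y hy (hf hzy ▸ hz)

theorem symm (h : DisjointPathFamily G X Y n) : DisjointPathFamily G Y X n := by
  obtain ⟨s, t, P, hs, ht, hP, hdisj⟩ := h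
  exact ⟨t, s, fun i => (P i).reverse, ht, hs, fun i => (hP i).reverse,
    fun i j hij x hi hj => hdisj i j hij x (by simpa using hi) (by simpa using hj)⟩

theorem le_ncard_left [Finite V] (h : DisjointPathFamily G X Y n) : n ≤ X.ncard := by
  obtain ⟨s, t, P, hs, -, -, hdisj⟩ := h
  have hinj : Function.Injective s := fun i j hij => by
    by_contra hne
    exact hdisj i j hne (s i) (P i).start_mem_support (by rw [hij]; exact (P j).start_mem_support)
  calc n = (univ : Set (Fin n)).ncard := by simp
    _ ≤ X.ncard := ncard_le_ncard_of_injOn s (fun i _ => hs i) hinj.injOn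

theorem le_ncard_right [Finite V] (h : DisjointPathFamily G X Y n) : n ≤ Y.ncard :=
  h.symm.le_ncard_left

end DisjointPathFamily

theorem mu_eq_min_ncard {V : Type} [Finite V] {G : SimpleGraph V} {X Y : Set V}
    (h : DisjointPathFamily G X Y (min X.ncard Y.ncard)) :
    mu G X Y = min X.ncard Y.ncard :=
  IsGreatest.csSup_eq ⟨h, fun _ hn => le_min hn.le_ncard_left hn.le_ncard_right⟩

theorem pathGraph_exists_walk_of_le {n : ℕ} {a b : Fin n} (hab : a ≤ b) :
    ∃ w : (pathGraph n).Walk a b, ∀ x ∈ w.support, a ≤ x ∧ x ≤ b := by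
  obtain ⟨b, hb⟩ := b
  induction b, (show a.val ≤ b from hab) using Nat.le_induction with
  | base => exact ⟨.nil, by simp⟩
  | succ m ham ih =>
    obtain ⟨w, hw⟩ := ih (by omega) ham
    refine ⟨w.concat (pathGraph_adj.2 (Or.inl rfl)), fun x hx => ?_⟩
    rw [Walk.support_concat, List.mem_append, List.mem_singleton] at hx
    rcases hx with hx | rfl
    · exact ⟨(hw x hx).1, (hw x hx).2.trans (Fin.mk_le_mk.2 m.le_succ)⟩
    · exact ⟨Fin.mk_le_mk.2 (by omega), le_rfl⟩

theorem SimpleGraph.Walk.mem_support_boxProdLeft {α β : Type*} {G : SimpleGraph α}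
    (H : SimpleGraph β) {a₁ a₂ : α} (b : β) (w : G.Walk a₁ a₂) {x : α × β} :
    x ∈ (w.boxProdLeft H b).support ↔ x.1 ∈ w.support ∧ x.2 = b := by
  have h : (w.boxProdLeft H b).support = w.support.map (G.boxProdLeft H b) := w.support_map _
  obtain ⟨a, b'⟩ := x
  simp [h, eq_comm]

theorem SimpleGraph.Walk.mem_support_boxProdRight {α β : Type*} (G : SimpleGraph α)
    {H : SimpleGraph β} {b₁ b₂ : β} (a : α) (w : H.Walk b₁ b₂) {x : α × β} :
    x ∈ (w.boxProdRight G a).support ↔ x.1 = a ∧ x.2 ∈ w.support := by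
  have h : (w.boxProdRight G a).support = w.support.map (G.boxProdRight H a) := w.support_map _
  obtain ⟨a', b⟩ := x
  simp [h, eq_comm, and_comm]

abbrev gridGraph (m n : ℕ) : SimpleGraph (Fin m × Fin n) := (pathGraph m).boxProd (pathGraph n)

/-- The index of the U-shape around the gap between columns `len - 1` and `len` on which a grid
vertex lies; of the two truncated differences at most one is nonzero. -/
def cutLevel {m n : ℕ} (len : ℕ) (p : Fin m × Fin n) : ℕ :=
  max p.2.val (max (len - 1 - p.1.val) (p.1.val - len))

theorem exists_walk_cutLevel_eq {m n len i : ℕ} (hi : i < len) (him : len + i < m) (hin : i < n) :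
    ∃ w : (gridGraph m n).Walk (⟨len - 1 - i, by omega⟩, ⟨0, by omega⟩)
      (⟨len + i, him⟩, ⟨0, by omega⟩), ∀ x ∈ w.support, cutLevel len x = i := by
  obtain ⟨v, hv⟩ := pathGraph_exists_walk_of_le (a := ⟨0, by omega⟩) (b := ⟨i, hin⟩)
    (Fin.mk_le_mk.2 (Nat.zero_le i))
  obtain ⟨h, hh⟩ := pathGraph_exists_walk_of_le (a := ⟨len - 1 - i, by omega⟩)
    (b := ⟨len + i, him⟩) (Fin.mk_le_mk.2 (by omega))
  refine ⟨(v.boxProdRight _ _).append ((h.boxProdLeft _ _).append (v.boxProdRight _ _).reverse),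
    fun x hx => ?_⟩
  rw [Walk.mem_support_append_iff, Walk.mem_support_append_iff, Walk.support_reverse,
    List.mem_reverse, Walk.mem_support_boxProdRight, Walk.mem_support_boxProdLeft,
    Walk.mem_support_boxProdRight] at hx
  obtain ⟨⟨a, ha⟩, ⟨d, hd⟩⟩ := x
  rcases hx with ⟨hxa, hxd⟩ | ⟨hxa, hxd⟩ | ⟨hxa, hxd⟩
  · have := hv _ hxd
    simp_all [cutLevel, Fin.le_def]
    omega
  · have := hh _ hxa
    simp_all [cutLevel, Fin.le_def]
    omega
  · have := hv _ hxd
    simp_all [cutLevel, Fin.le_def]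
    omega

theorem disjointPathFamily_gridGraph {m n : ℕ} (len : ℕ) (hn : min len (m - len) ≤ n) :
    DisjointPathFamily (gridGraph m n) {p | p.2.val = 0 ∧ p.1.val < len}
      {p | p.2.val = 0 ∧ len ≤ p.1.val} (min len (m - len)) := by
  have hwalk (i : Fin (min len (m - len))) := exists_walk_cutLevel_eq (m := m) (n := n)
    (len := len) (i := i) (by omega) (by omega) (by omega)
  choose P hP using hwalk
  refine .of_walks P (fun i => ⟨rfl, by simp; omega⟩) (fun i => ⟨rfl, by simp⟩) ?_
  intro i j hij x hi hj
  exact hij (Fin.ext ((hP i x hi).symm.trans (hP j x hj)))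

/-- Unrolls the grid onto the cylinder, column `0` going to angle `st` and row `0` to the outer
cycle. -/
def cylChart (k : ℕ) (st : Fin k) : gridGraph k k →g cylGrid k k where
  toFun p := (st + p.1, p.2.rev)
  map_rel' {p q} h := by
    obtain ⟨⟨a, ha⟩, ⟨d, hd⟩⟩ := p
    obtain ⟨⟨a', ha'⟩, ⟨d', hd'⟩⟩ := q
    simp only [gridGraph, boxProd_adj, pathGraph_adj, Fin.mk.injEq] at h
    refine ⟨?_, ?_⟩
    · simp only [ne_eq, Prod.mk.injEq, add_right_inj, Fin.rev_inj, Fin.mk.injEq]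
      omega
    rcases h with ⟨had, rfl⟩ | ⟨hdd, rfl⟩
    · refine Or.inl ⟨rfl, ?_⟩
      simp only [Fin.val_add, Nat.mod_add_mod]
      rcases had with rfl | rfl <;> simp [add_assoc]
    · refine Or.inr ⟨rfl, ?_⟩
      simp only [Fin.val_rev]
      omega

theorem cylChart_injective (k : ℕ) (st : Fin k) : Function.Injective (cylChart k st) := by
  rintro ⟨a, d⟩ ⟨a', d'⟩ h
  simp only [cylChart, RelHom.coeFn_mk, Prod.mk.injEq, add_right_inj, Fin.rev_inj] at h
  rw [h.1, h.2]

def arc {k : ℕ} (st : Fin k) (len : ℕ) : Finset (Fin k) :=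
  (Finset.range len).image fun o => (⟨((st : ℕ) + o) % k, Nat.mod_lt _ st.pos⟩ : Fin k)

theorem add_mem_arc_iff {k : ℕ} (st a : Fin k) (len : ℕ) :
    st + a ∈ arc st len ↔ a.val < min len k := by
  simp only [arc, Finset.mem_image, Finset.mem_range, Fin.ext_iff, Fin.val_add]
  constructor
  · rintro ⟨o, ho, heq⟩
    have hoa : o % k = a := by
      simpa [Nat.ModEq, Nat.mod_eq_of_lt a.2] using Nat.ModEq.add_left_cancel' _ heq
    have := Nat.mod_le o k
    omega
  · intro ha
    exact ⟨a, by omega, rfl⟩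

theorem card_arc {k : ℕ} (st : Fin k) (len : ℕ) : (arc st len).card = min len k := by
  have : NeZero k := NeZero.of_pos st.pos
  have harc : arc st len = ({a | a.val < min len k} : Finset (Fin k)).image (st + ·) := by
    ext x
    rw [Finset.mem_image (f := (st + ·))]
    constructor
    · intro hx
      refine ⟨x - st, ?_, add_sub_cancel st x⟩
      simpa using (add_mem_arc_iff st (x - st) len).1 (by rwa [add_sub_cancel])
    · rintro ⟨a, ha, rfl⟩
      exact (add_mem_arc_iff st a len).2 (by simpa using ha)
  rw [harc, Finset.card_image_of_injective _ (add_right_injective st), Fin.card_filter_val_lt]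
  omega

theorem ncard_setOf_snd_eq_and_fst_mem {α β : Type*} (b : β) (S : Finset α) :
    {p : α × β | p.2 = b ∧ p.1 ∈ S}.ncard = S.card := by
  have h : {p : α × β | p.2 = b ∧ p.1 ∈ S} = (fun a => (a, b)) '' S := by
    ext ⟨a, b'⟩
    simp [and_comm, eq_comm]
  rw [h, Set.ncard_image_of_injective _ (Prod.mk_left_injective b), Set.ncard_coe_finset]

/-- In the `(k,k)`-cylindrical grid, for every partition of the outermost cycle into two
nonempty arcs `X₁, X₂`, the maximum number of vertex-disjoint `(X₁,X₂)`-paths equals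
`min(|X₁|,|X₂|)`. -/
theorem stmt16 (k : ℕ) (hk : 3 ≤ k) (X₁ X₂ : Finset (Fin k))
    (hdisj : Disjoint X₁ X₂) (hunion : X₁ ∪ X₂ = Finset.univ)
    (ha1 : IsArc X₁) :
    mu (cylGrid k k)
        {p : Fin k × Fin k | p.2 = (⟨k - 1, by omega⟩ : Fin k) ∧ p.1 ∈ X₁}
        {p : Fin k × Fin k | p.2 = (⟨k - 1, by omega⟩ : Fin k) ∧ p.1 ∈ X₂}
      = min X₁.card X₂.card := by
  obtain ⟨st, len, rfl⟩ : ∃ st len, X₁ = arc st len := ha1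
  obtain rfl : X₂ = (arc st len)ᶜ := (IsCompl.symm ⟨hdisj, codisjoint_iff.2 hunion⟩).eq_compl
  rw [← ncard_setOf_snd_eq_and_fst_mem (⟨k - 1, by omega⟩ : Fin k) (arc st len),
    ← ncard_setOf_snd_eq_and_fst_mem (⟨k - 1, by omega⟩ : Fin k) (arc st len)ᶜ]
  apply mu_eq_min_ncard
  rw [ncard_setOf_snd_eq_and_fst_mem, ncard_setOf_snd_eq_and_fst_mem, Finset.card_compl,
    Fintype.card_fin, card_arc]
  refine (disjointPathFamily_gridGraph (min len k) (by omega)).map (cylChart k st)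
    (cylChart_injective k st) ?_ ?_
  · rintro ⟨a, d⟩ ⟨hd : d.val = 0, ha⟩
    exact ⟨Fin.ext (by simp [cylChart, hd]), (add_mem_arc_iff st a len).2 ha⟩
  · rintro ⟨a, d⟩ ⟨hd : d.val = 0, ha⟩
    exact ⟨Fin.ext (by simp [cylChart, hd]),
      Finset.mem_compl.2 fun h => ((add_mem_arc_iff st a len).1 h).not_ge ha⟩
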